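/- arXiv:2501.04127 — 7 statements merged into one kernel-verified Lean document; each statement's English description precedes it below -/
import Mathlib

section
/- Let X be a topological space, let γ = (γ_1, …, γ_N) be an iterated function system on X such that every γ_k is a closed embedding, and let S be a meager subset of X. Assume there exists a dense open subset U of X such that γ_1(U), …, γ_N(U) are all open in X. Then the smallest completely γ-invariant subset of X containing S (i.e., the intersection of all completely γ-invariant subsets of X that contain S) is meager in X. -/
/-!
An embedding maps meagre sets to meagre sets. Pulling back is where `U` enters: on the dense
open set `U` the map `γ k` is an open embedding, so preimages of meagre sets are meagre inside
`U`, while the rest of the preimage lies in the closed nowhere dense set `Uᶜ`. Hence one step of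
closing a meagre set under all images and preimages keeps it meagre, and countably many steps
reach the smallest completely invariant set containing `S`.
-/

/-- A subset `S` of `X` is completely invariant under the iterated function system `γ`
if `γ k '' S ⊆ S` and `γ k ⁻¹' S ⊆ S` for every index `k`. -/
def CompletelyInvariant {X : Type*} {N : ℕ} (γ : Fin N → X → X) (S : Set X) : Prop :=
  ∀ k : Fin N, γ k '' S ⊆ S ∧ γ k ⁻¹' S ⊆ S

open Set Topology

lemma Topology.IsInducing.isMeagre_preimage {X Y : Type*} [TopologicalSpace X]
    [TopologicalSpace Y] {f : X → Y} (hf : IsInducing f) {U : Set X} (hUopen : IsOpen U)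
    (hUdense : Dense U) (hfU : IsOpen (f '' U)) {s : Set Y} (hs : IsMeagre s) :
    IsMeagre (f ⁻¹' s) := by
  have hfU_ind : IsInducing (f ∘ (↑) : U → Y) := hf.comp .subtypeVal
  have hfU_open : IsOpenMap (f ∘ (↑) : U → Y) :=
    hfU_ind.isOpenMap (by rwa [range_comp, Subtype.range_coe])
  have hinside : IsMeagre (((↑) : U → X) '' ((f ∘ (↑)) ⁻¹' s)) :=
    (hs.preimage_of_isOpenMap hfU_ind.continuous hfU_open).image_val
  have houtside : IsMeagre Uᶜ := by
    rw [IsMeagre, compl_compl]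
    exact residual_of_dense_open hUopen hUdense
  refine (hinside.union houtside).mono fun x hx => ?_
  by_cases hxU : x ∈ U
  · exact Or.inl ⟨⟨x, hxU⟩, hx, rfl⟩
  · exact Or.inr hxU

namespace CompletelyInvariant

variable {X : Type*} {N : ℕ} (γ : Fin N → X → X)

def orbitStep (A : Set X) : Set X :=
  A ∪ (⋃ k, γ k '' A) ∪ ⋃ k, γ k ⁻¹' A

lemma iUnion_iterate_orbitStep (S : Set X) :
    CompletelyInvariant γ (⋃ n, (orbitStep γ)^[n] S) := by
  have hstep : ∀ n, (orbitStep γ)^[n + 1] S = orbitStep γ ((orbitStep γ)^[n] S) :=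
    fun n => Function.iterate_succ_apply' _ n S
  intro k
  constructor
  · rintro _ ⟨x, hx, rfl⟩
    obtain ⟨n, hn⟩ := mem_iUnion.mp hx
    exact mem_iUnion.mpr ⟨n + 1, hstep n ▸ Or.inl (Or.inr (mem_iUnion.mpr ⟨k, x, hn, rfl⟩))⟩
  · intro x hx
    obtain ⟨n, hn⟩ := mem_iUnion.mp hx
    exact mem_iUnion.mpr ⟨n + 1, hstep n ▸ Or.inr (mem_iUnion.mpr ⟨k, hn⟩)⟩

lemma sInter_subset_iUnion_iterate_orbitStep (S : Set X) :
    ⋂₀ {T : Set X | CompletelyInvariant γ T ∧ S ⊆ T} ⊆ ⋃ n, (orbitStep γ)^[n] S :=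
  sInter_subset_of_mem ⟨iUnion_iterate_orbitStep γ S, subset_iUnion (fun n => (orbitStep γ)^[n] S) 0⟩

end CompletelyInvariant

theorem isMeagre_completelyInvariant_closure_general {X : Type*} [TopologicalSpace X] {N : ℕ}
    (γ : Fin N → X → X)
    (hemb : ∀ k, Topology.IsEmbedding (γ k))
    (S : Set X) (hS : IsMeagre S)
    (U : Set X) (hUopen : IsOpen U) (hUdense : Dense U)
    (himg : ∀ k, IsOpen (γ k '' U)) :
    IsMeagre (⋂₀ {T : Set X | CompletelyInvariant γ T ∧ S ⊆ T}) := by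
  have hstep : ∀ A, IsMeagre A → IsMeagre (CompletelyInvariant.orbitStep γ A) := fun A hA =>
    (hA.union (isMeagre_iUnion fun k => (hemb k).isInducing.isMeagre_image hA)).union
      (isMeagre_iUnion fun k =>
        (hemb k).isInducing.isMeagre_preimage hUopen hUdense (himg k) hA)
  have hiter : ∀ n, IsMeagre ((CompletelyInvariant.orbitStep γ)^[n] S) :=
    Function.Iterate.rec (fun A => IsMeagre A) hS hstep
  exact (isMeagre_iUnion hiter).mono
    (CompletelyInvariant.sInter_subset_iUnion_iterate_orbitStep γ S)

/-- If all members of the iterated function system `γ` are closed embeddings, there is a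
dense open set `U` whose images `γ k '' U` are all open, and `S` is meager, then the smallest
completely `γ`-invariant set containing `S` is meager. -/
theorem isMeagre_completelyInvariant_closure {X : Type*} [TopologicalSpace X] {N : ℕ}
    (γ : Fin N → X → X)
    (hemb : ∀ k, Topology.IsEmbedding (γ k)) (hclosed : ∀ k, IsClosedMap (γ k))
    (S : Set X) (hS : IsMeagre S)
    (U : Set X) (hUopen : IsOpen U) (hUdense : Dense U)
    (himg : ∀ k, IsOpen (γ k '' U)) :
    IsMeagre (⋂₀ {T : Set X | CompletelyInvariant γ T ∧ S ⊆ T}) :=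
  isMeagre_completelyInvariant_closure_general γ hemb S hS U hUopen hUdense himg
end

section
/- Let X be a compact Hausdorff space and let γ = (γ_1, …, γ_N) be an iterated function system on X such that every γ_k is a topological embedding. Fix m, n ∈ ℕ. For continuous functions f : X_m → ℂ and g : X_n → ℂ, define f ⊡ g : X_{m+n} → ℂ by (f ⊡ g)(x_{m+n}, …, x_0) := f(x_{m+n}, …, x_n) · g(x_n, …, x_0). Then the closed additive subgroup of C(X_{m+n}, ℂ), with respect to the supremum norm, generated by the set {f ⊡ g : f ∈ C(X_m, ℂ), g ∈ C(X_n, ℂ)} is all of C(X_{m+n}, ℂ). -/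
/-- `c : Fin (n+1) → X` (written `(x_n, …, x_0)` with `x_i = c i`) is a `γ`-chain of length `n`
if for each `i < n` there is an index `k` with `x_{i+1} = γ k (x_i)`. -/
def IsGammaChain {X : Type*} {N : ℕ} (γ : Fin N → X → X) (n : ℕ)
    (c : Fin (n + 1) → X) : Prop :=
  ∀ i : ℕ, ∀ h : i < n, ∃ k : Fin N, c ⟨i + 1, by omega⟩ = γ k (c ⟨i, by omega⟩)

/-- The upper part `(x_{m+n}, …, x_n)` of a `γ`-chain of length `m + n` is a `γ`-chain of
length `m`. -/
lemma IsGammaChain.high {X : Type*} {N : ℕ} {γ : Fin N → X → X} {m n : ℕ}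
    {c : Fin (m + n + 1) → X} (hc : IsGammaChain γ (m + n) c) :
    IsGammaChain γ m (fun i : Fin (m + 1) => c ⟨n + i.1, by omega⟩) := by
  intro i hi
  obtain ⟨k, hk⟩ := hc (n + i) (by omega)
  exact ⟨k, hk⟩

/-- The lower part `(x_n, …, x_0)` of a `γ`-chain of length `m + n` is a `γ`-chain of
length `n`. -/
lemma IsGammaChain.low {X : Type*} {N : ℕ} {γ : Fin N → X → X} {m n : ℕ}
    {c : Fin (m + n + 1) → X} (hc : IsGammaChain γ (m + n) c) :
    IsGammaChain γ n (fun i : Fin (n + 1) => c ⟨i.1, by omega⟩) := by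
  intro i hi
  obtain ⟨k, hk⟩ := hc i (by omega)
  exact ⟨k, hk⟩

/-!
The products `f ⊡ g` form a multiplicative submonoid of `C(X_{m+n}, ℂ)` that is closed under
conjugation and contains the constants, so the additive subgroup it generates is already the
star subalgebra it generates. That subalgebra separates points, because a chain is determined
by its upper part in `X_m` and its lower part in `X_n`, and `X_{m+n}` is compact, because chains
form a closed subset of `X^{m+n+1}`; so Stone–Weierstrass applies.
-/

theorem StarAlgebra.coe_adjoin_eq_addSubgroupClosure {R A : Type*} [CommRing R] [StarRing R]
    [Ring A] [StarRing A] [Algebra R A] [StarModule R A] {M : Submonoid A}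
    (star_mem : ∀ a ∈ M, star a ∈ M) (algebraMap_mem : ∀ r, algebraMap R A r ∈ M) :
    (adjoin R (M : Set A) : Set A) = AddSubgroup.closure (M : Set A) := by
  have hstar : star (M : Set A) ∪ M = M :=
    Set.union_eq_right.mpr fun a ha => by simpa using star_mem _ ha
  have halg : Set.range (algebraMap R A) ∪ M = M :=
    Set.union_eq_right.mpr <| Set.range_subset_iff.mpr algebraMap_mem
  ext a
  rw [SetLike.mem_coe, ← StarSubalgebra.mem_toSubalgebra, adjoin_toSubalgebra,
    Set.union_comm, hstar, Algebra.mem_adjoin_iff, halg, Subring.mem_closure_iff,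
    Submonoid.closure_eq, SetLike.mem_coe]

/-- For `p`, `q` the restrictions of a chain to its upper and lower part, these are the
products `f ⊡ g`. -/
def ContinuousMap.mulCompSubmonoid {Y Y₁ Y₂ : Type*} [TopologicalSpace Y] [TopologicalSpace Y₁]
    [TopologicalSpace Y₂] (p : C(Y, Y₁)) (q : C(Y, Y₂)) : Submonoid C(Y, ℂ) where
  carrier := {h | ∃ (f : C(Y₁, ℂ)) (g : C(Y₂, ℂ)), ∀ y, h y = f (p y) * g (q y)}
  one_mem' := ⟨1, 1, fun y => by simp⟩
  mul_mem' := by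
    rintro a b ⟨f, g, hfg⟩ ⟨f', g', hfg'⟩
    exact ⟨f * f', g * g', fun y => by simp only [ContinuousMap.mul_apply, hfg, hfg']; ring⟩

namespace ContinuousMap

variable {Y Y₁ Y₂ : Type*} [TopologicalSpace Y] [TopologicalSpace Y₁] [TopologicalSpace Y₂]

lemma star_mem_mulCompSubmonoid {p : C(Y, Y₁)} {q : C(Y, Y₂)} {h : C(Y, ℂ)}
    (hh : h ∈ mulCompSubmonoid p q) : star h ∈ mulCompSubmonoid p q := by
  obtain ⟨f, g, hfg⟩ := hh
  exact ⟨star f, star g, fun y => by simp only [star_apply, hfg, star_mul']⟩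

lemma algebraMap_mem_mulCompSubmonoid (p : C(Y, Y₁)) (q : C(Y, Y₂)) (z : ℂ) :
    algebraMap ℂ C(Y, ℂ) z ∈ mulCompSubmonoid p q :=
  ⟨const Y₁ z, 1, fun y => by simp⟩

lemma comp_mem_mulCompSubmonoid_left (p : C(Y, Y₁)) (q : C(Y, Y₂)) (f : C(Y₁, ℂ)) :
    f.comp p ∈ mulCompSubmonoid p q :=
  ⟨f, 1, fun y => by simp⟩

lemma comp_mem_mulCompSubmonoid_right (p : C(Y, Y₁)) (q : C(Y, Y₂)) (g : C(Y₂, ℂ)) :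
    g.comp q ∈ mulCompSubmonoid p q :=
  ⟨1, g, fun y => by simp⟩

lemma exists_apply_ne_apply [T35Space Y₁] {x y : Y₁} (hxy : x ≠ y) :
    ∃ f : C(Y₁, ℂ), f x ≠ f y := by
  obtain ⟨φ, hφ, hne⟩ := separatesPoints_continuous_of_t35Space hxy
  exact ⟨⟨fun z => (φ z : ℂ), Complex.continuous_ofReal.comp hφ⟩, by simpa using hne⟩

theorem topologicalClosure_addSubgroupClosure_mulCompSubmonoid_eq_top [CompactSpace Y] [T2Space Y] [T35Space Y₁]
    [T35Space Y₂] (p : C(Y, Y₁)) (q : C(Y, Y₂)) (hpq : ∀ x y, p x = p y → q x = q y → x = y) :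
    (AddSubgroup.closure (mulCompSubmonoid p q : Set C(Y, ℂ))).topologicalClosure = ⊤ := by
  set A := StarAlgebra.adjoin ℂ (mulCompSubmonoid p q : Set C(Y, ℂ))
  have hA : (A : Set C(Y, ℂ)) = AddSubgroup.closure (mulCompSubmonoid p q : Set C(Y, ℂ)) :=
    StarAlgebra.coe_adjoin_eq_addSubgroupClosure (fun _ => star_mem_mulCompSubmonoid)
      (algebraMap_mem_mulCompSubmonoid p q)
  have hsep : A.SeparatesPoints := by
    intro x y hxy
    obtain ⟨h, hM, hne⟩ : ∃ h ∈ mulCompSubmonoid p q, h x ≠ h y := by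
      by_cases hp : p x = p y
      · obtain ⟨g, hg⟩ := exists_apply_ne_apply fun hq => hxy (hpq x y hp hq)
        exact ⟨g.comp q, comp_mem_mulCompSubmonoid_right p q g, hg⟩
      · obtain ⟨f, hf⟩ := exists_apply_ne_apply hp
        exact ⟨f.comp p, comp_mem_mulCompSubmonoid_left p q f, hf⟩
    exact ⟨h, ⟨h, StarAlgebra.subset_adjoin ℂ _ hM, rfl⟩, hne⟩
  have hdense := starSubalgebra_topologicalClosure_eq_top_of_separatesPoints A hsep
  rw [← SetLike.coe_set_eq, StarSubalgebra.topologicalClosure_coe, hA] at hdense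
  rw [← SetLike.coe_set_eq, AddSubgroup.topologicalClosure_coe, hdense]
  rfl

end ContinuousMap

section GammaChain

variable {X : Type*} [TopologicalSpace X] {N : ℕ} (γ : Fin N → X → X)

lemma isClosed_setOf_isGammaChain [T2Space X] (hγ : ∀ k, Continuous (γ k)) (n : ℕ) :
    IsClosed {c | IsGammaChain γ n c} := by
  simp only [IsGammaChain, Set.ofPred_forall, Set.ofPred_exists]
  exact isClosed_iInter fun i => isClosed_iInter fun hi => isClosed_iUnion_of_finite fun k =>
    isClosed_eq (continuous_apply _) ((hγ k).comp (continuous_apply _))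

lemma compactSpace_gammaChain [CompactSpace X] [T2Space X] (hγ : ∀ k, Continuous (γ k))
    (n : ℕ) : CompactSpace {c // IsGammaChain γ n c} :=
  isCompact_iff_compactSpace.mp (isClosed_setOf_isGammaChain γ hγ n).isCompact

def gammaChainHigh (m n : ℕ) :
    C({c // IsGammaChain γ (m + n) c}, {c // IsGammaChain γ m c}) where
  toFun c := ⟨fun i => c.1 ⟨n + i.1, by omega⟩, c.2.high⟩
  continuous_toFun := Continuous.subtype_mk (continuous_pi fun i =>
    (continuous_apply (⟨n + i.1, by omega⟩ : Fin (m + n + 1))).comp continuous_subtype_val) _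

def gammaChainLow (m n : ℕ) :
    C({c // IsGammaChain γ (m + n) c}, {c // IsGammaChain γ n c}) where
  toFun c := ⟨fun i => c.1 ⟨i.1, by omega⟩, c.2.low⟩
  continuous_toFun := Continuous.subtype_mk (continuous_pi fun i =>
    (continuous_apply (⟨i.1, by omega⟩ : Fin (m + n + 1))).comp continuous_subtype_val) _

variable {γ} in
lemma gammaChain_eq_of_high_eq_of_low_eq {m n : ℕ} (c d : {c // IsGammaChain γ (m + n) c})
    (hhigh : gammaChainHigh γ m n c = gammaChainHigh γ m n d)
    (hlow : gammaChainLow γ m n c = gammaChainLow γ m n d) : c = d := by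
  ext i
  by_cases hi : i.1 ≤ n
  · exact congr_fun (congrArg Subtype.val hlow) ⟨i.1, by omega⟩
  · simpa [gammaChainHigh, show n + (i.1 - n) = i.1 by omega] using
      congr_fun (congrArg Subtype.val hhigh) ⟨i.1 - n, by omega⟩

end GammaChain

/-- Proposition 3.15: if `X` is compact Hausdorff and all maps of the iterated function
system `γ` are embeddings, then the closed additive subgroup of `C(X_{m+n}, ℂ)` generated by
the products `f ⊡ g`, where `(f ⊡ g)(x_{m+n}, …, x_0) = f(x_{m+n}, …, x_n) · g(x_n, …, x_0)`,
is all of `C(X_{m+n}, ℂ)`. -/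
theorem boxdot_generates {X : Type*} [TopologicalSpace X] [CompactSpace X] [T2Space X]
    {N : ℕ} (γ : Fin N → X → X) (hemb : ∀ k, Topology.IsEmbedding (γ k)) (m n : ℕ) :
    (AddSubgroup.closure
        {h : C({c : Fin (m + n + 1) → X // IsGammaChain γ (m + n) c}, ℂ) |
          ∃ (f : C({c : Fin (m + 1) → X // IsGammaChain γ m c}, ℂ))
            (g : C({c : Fin (n + 1) → X // IsGammaChain γ n c}, ℂ)),
            ∀ c : {c : Fin (m + n + 1) → X // IsGammaChain γ (m + n) c},
              h c = f ⟨fun i => c.1 ⟨n + i.1, by omega⟩, c.2.high⟩ *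
                g ⟨fun i => c.1 ⟨i.1, by omega⟩, c.2.low⟩}).topologicalClosure = ⊤ := by
  have hγ : ∀ k, Continuous (γ k) := fun k => (hemb k).continuous
  have := compactSpace_gammaChain γ hγ (m + n)
  exact ContinuousMap.topologicalClosure_addSubgroupClosure_mulCompSubmonoid_eq_top (gammaChainHigh γ m n)
    (gammaChainLow γ m n) gammaChain_eq_of_high_eq_of_low_eq
end

section
/- Let X be a topological space, let γ = (γ_1, …, γ_N) be an iterated function system on X, and let 𝕏 ⊆ X be a subset satisfying: (i) 𝕏 is completely invariant under γ; (ii) the images γ_1(𝕏), …, γ_N(𝕏) are pairwise disjoint; (iii) the restriction of each γ_k to 𝕏 is injective; and (iv) 𝕏 is disjoint from the union over all pairs of distinct finite index sequences 𝐣 ≠ 𝐤 of the sets {x ∈ X : γ_𝐣(x) = γ_𝐤(x)}. For m, n ∈ ℕ define 𝕏_{m,n} := {(γ_𝐣(x), γ_𝐤(x)) : x ∈ 𝕏, 𝐣 ∈ {1,…,N}^m, 𝐤 ∈ {1,…,N}^n} ⊆ X × X. Then for all m, n, p, q ∈ ℕ with m − n ≠ p − q, the sets 𝕏_{m,n} and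 𝕏_{p,q} are disjoint. -/
/-- For a finite sequence `𝐤 = (k_n, …, k_1)` of indices, encoded as the list
`[k_n, …, k_1]`, `seqComp γ 𝐤` is the composition `γ_{k_n} ∘ ⋯ ∘ γ_{k_1}`
(the identity for the empty sequence). -/
def seqComp {X : Type*} {N : ℕ} (γ : Fin N → X → X) (l : List (Fin N)) : X → X :=
  l.foldr (fun k f => γ k ∘ f) id

/-- Lemma 5.4.5: under conditions (I)–(III) and (V), the sets
`𝕏_{m,n} = {(γ_𝐣(x), γ_𝐤(x)) : x ∈ 𝕏, |𝐣| = m, |𝐤| = n}` and `𝕏_{p,q}` are disjoint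
whenever `m − n ≠ p − q`. -/
theorem Xmn_disjoint {X : Type*} [TopologicalSpace X] {N : ℕ}
    (γ : Fin N → X → X) (hγ : ∀ k, Continuous (γ k)) (𝕏 : Set X)
    (hinv : CompletelyInvariant γ 𝕏)
    (hdisj : ∀ j k : Fin N, j ≠ k → Disjoint (γ j '' 𝕏) (γ k '' 𝕏))
    (hinj : ∀ k : Fin N, Set.InjOn (γ k) 𝕏)
    (hfree : Disjoint 𝕏 (⋃ (j : List (Fin N)) (k : List (Fin N)) (_ : j ≠ k),
      {x : X | seqComp γ j x = seqComp γ k x}))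
    (m n p q : ℕ) (h : (m : ℤ) - n ≠ (p : ℤ) - q) :
    Disjoint
      {z : X × X | ∃ x ∈ 𝕏, ∃ j k : List (Fin N), j.length = m ∧ k.length = n ∧
        z = (seqComp γ j x, seqComp γ k x)}
      {z : X × X | ∃ x ∈ 𝕏, ∃ j k : List (Fin N), j.length = p ∧ k.length = q ∧
        z = (seqComp γ j x, seqComp γ k x)} := by
  -- membership of orbits
  have hmem : ∀ (l : List (Fin N)) (x : X), x ∈ 𝕏 → seqComp γ l x ∈ 𝕏 := by
    intro l
    induction l with
    | nil => intro x hx; exact hx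
    | cons a t ih => intro x hx; exact (hinv a).1 ⟨_, ih x hx, rfl⟩
  -- composition lemma
  have happ : ∀ (a b : List (Fin N)) (x : X),
      seqComp γ (a ++ b) x = seqComp γ a (seqComp γ b x) := by
    intro a b x
    induction a with
    | nil => rfl
    | cons hd t ih =>
      show γ hd (seqComp γ (t ++ b) x) = γ hd (seqComp γ t (seqComp γ b x))
      rw [ih]
  -- freeness: equal compositions at a point of 𝕏 force equal words
  have hword : ∀ (a b : List (Fin N)) (x : X), x ∈ 𝕏 →
      seqComp γ a x = seqComp γ b x → a = b := by
    intro a b x hx he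
    by_contra hne
    exact Set.disjoint_left.mp hfree hx
      (Set.mem_iUnion.2 ⟨a, Set.mem_iUnion.2 ⟨b, Set.mem_iUnion.2 ⟨hne, he⟩⟩⟩)
  -- stripping lemma
  have hstrip : ∀ (a b : List (Fin N)) (x x' : X), x ∈ 𝕏 → x' ∈ 𝕏 →
      a.length ≤ b.length → seqComp γ a x = seqComp γ b x' →
      ∃ c, b = a ++ c ∧ x = seqComp γ c x' := by
    intro a
    induction a with
    | nil => intro b x x' _ _ _ he; exact ⟨b, rfl, he⟩
    | cons hd t ih =>
      intro b x x' hx hx' hlen he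
      cases b with
      | nil => simp at hlen
      | cons hd' t' =>
        have h1 : γ hd (seqComp γ t x) = γ hd' (seqComp γ t' x') := he
        have hm1 := hmem t x hx
        have hm2 := hmem t' x' hx'
        have hhh : hd = hd' := by
          by_contra hne
          exact Set.disjoint_left.mp (hdisj hd hd' hne) ⟨_, hm1, rfl⟩ ⟨_, hm2, h1.symm⟩
        subst hhh
        have h2 : seqComp γ t x = seqComp γ t' x' := hinj hd hm1 hm2 h1
        obtain ⟨c, hc1, hc2⟩ := ih t' x x' hx hx' (by simpa using hlen) h2
        exact ⟨c, by simp [hc1], hc2⟩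
  rw [Set.disjoint_left]
  rintro ⟨z1, z2⟩ ⟨x, hx, j, k, hj, hk, hz⟩ ⟨x', hx', j', k', hj', hk', hz'⟩
  obtain ⟨e1, e2⟩ := Prod.mk.injEq .. ▸ (hz ▸ hz' : (seqComp γ j x, seqComp γ k x)
      = (seqComp γ j' x', seqComp γ k' x'))
  rcases le_total j.length j'.length with hle | hle
  · obtain ⟨c, hc1, hc2⟩ := hstrip j j' x x' hx hx' hle e1
    have : k ++ c = k' := by
      apply hword _ _ x' hx'
      rw [happ, ← hc2]; exact e2
    have hlen1 : j'.length = j.length + c.length := by rw [hc1]; simp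
    have hlen2 : k'.length = k.length + c.length := by rw [← this]; simp
    omega
  · obtain ⟨c, hc1, hc2⟩ := hstrip j' j x' x hx' hx hle e1.symm
    have : k' ++ c = k := by
      apply hword _ _ x hx
      rw [happ, ← hc2]; exact e2.symm
    have hlen1 : j.length = j'.length + c.length := by rw [hc1]; simp
    have hlen2 : k.length = k'.length + c.length := by rw [← this]; simp
    omega
end

section
/- Let X be a compact Hausdorff space and let γ = (γ_1, …, γ_N) be an iterated function system on X such that every γ_k is a topological embedding. Assume there exists a dense open subset U of X such that the images γ_1(U), …, γ_N(U) are pairwise disjoint and contained in U. If γ is not essentially free, then there exists a non-empty finite sequence 𝐤 of indices in {1, …, N} such that the set {x ∈ X : x = γ_𝐤(x)} has non-empty interior. -/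
/-- An iterated function system `γ` is essentially free if for all distinct finite index
sequences `𝐤` and `𝐥` the coincidence set `{x | γ_𝐤(x) = γ_𝐥(x)}` is nowhere dense. -/
def EssentiallyFree {X : Type*} [TopologicalSpace X] {N : ℕ} (γ : Fin N → X → X) : Prop :=
  ∀ k l : List (Fin N), k ≠ l → IsNowhereDense {x : X | seqComp γ k x = seqComp γ l x}

lemma seqComp_cons {X : Type*} {N : ℕ} (γ : Fin N → X → X) (a : Fin N) (l : List (Fin N))
    (x : X) : seqComp γ (a :: l) x = γ a (seqComp γ l x) := rfl

lemma seqComp_mem {X : Type*} {N : ℕ} (γ : Fin N → X → X) {U : Set X}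
    (hUsub : ∀ k, γ k '' U ⊆ U) (l : List (Fin N)) {x : X} (hx : x ∈ U) :
    seqComp γ l x ∈ U := by
  induction l with
  | nil => exact hx
  | cons a t ih => exact hUsub a ⟨_, ih, rfl⟩

lemma seqComp_continuous {X : Type*} [TopologicalSpace X] {N : ℕ} {γ : Fin N → X → X}
    (hc : ∀ k, Continuous (γ k)) (l : List (Fin N)) : Continuous (seqComp γ l) := by
  induction l with
  | nil => exact continuous_id
  | cons a t ih => exact (hc a).comp ih

lemma key_lemma {X : Type*} [TopologicalSpace X] {N : ℕ} (γ : Fin N → X → X)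
    (hinj : ∀ k, Function.Injective (γ k))
    (U : Set X)
    (hUdisj : ∀ j k : Fin N, j ≠ k → Disjoint (γ j '' U) (γ k '' U))
    (hUsub : ∀ k : Fin N, γ k '' U ⊆ U) :
    ∀ (k l : List (Fin N)), k ≠ l →
      ∀ V : Set X, IsOpen V → V.Nonempty → V ⊆ U →
      (∀ x ∈ V, seqComp γ k x = seqComp γ l x) →
      ∃ m : List (Fin N), m ≠ [] ∧ (interior {x : X | x = seqComp γ m x}).Nonempty := by
  intro k
  induction k with
  | nil =>
    intro l hne V hVo hVne hVU hVeq
    refine ⟨l, fun h => hne h.symm, ?_⟩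
    have hsub : V ⊆ {x : X | x = seqComp γ l x} := fun x hx => hVeq x hx
    exact hVne.mono (interior_maximal hsub hVo)
  | cons a k' ih =>
    intro l hne V hVo hVne hVU hVeq
    cases l with
    | nil =>
      refine ⟨a :: k', by simp, ?_⟩
      have hsub : V ⊆ {x : X | x = seqComp γ (a :: k') x} := fun x hx => (hVeq x hx).symm
      exact hVne.mono (interior_maximal hsub hVo)
    | cons b l' =>
      have hab : a = b := by
        by_contra h
        obtain ⟨x, hx⟩ := hVne
        have h1 : seqComp γ (a :: k') x ∈ γ a '' U :=
          ⟨_, seqComp_mem γ hUsub k' (hVU hx), rfl⟩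
        have h2 : seqComp γ (a :: k') x ∈ γ b '' U := by
          rw [hVeq x hx]
          exact ⟨_, seqComp_mem γ hUsub l' (hVU hx), rfl⟩
        exact Set.disjoint_left.mp (hUdisj a b h) h1 h2
      subst hab
      have hne' : k' ≠ l' := fun h => hne (by rw [h])
      exact ih l' hne' V hVo hVne hVU (fun x hx => hinj a (hVeq x hx))

/-- Lemma 5.5.3: if `γ` consists of embeddings of a compact Hausdorff space, there is a dense
open set `U` whose images `γ_1(U), …, γ_N(U)` are pairwise disjoint and contained in `U`, and
`γ` is not essentially free, then for some non-empty finite index sequence `𝐤` the fixed point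
set `{x | x = γ_𝐤(x)}` has non-empty interior. -/
theorem exists_fixedSet_nonempty_interior {X : Type*} [TopologicalSpace X] [CompactSpace X]
    [T2Space X] {N : ℕ} (γ : Fin N → X → X) (hemb : ∀ k, Topology.IsEmbedding (γ k))
    (U : Set X) (hUopen : IsOpen U) (hUdense : Dense U)
    (hUdisj : ∀ j k : Fin N, j ≠ k → Disjoint (γ j '' U) (γ k '' U))
    (hUsub : ∀ k : Fin N, γ k '' U ⊆ U)
    (hnf : ¬ EssentiallyFree γ) :
    ∃ k : List (Fin N), k ≠ [] ∧ (interior {x : X | x = seqComp γ k x}).Nonempty := by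
  rw [EssentiallyFree] at hnf
  push_neg at hnf
  obtain ⟨k, l, hkl, hC⟩ := hnf
  have hcont : ∀ j, Continuous (γ j) := fun j => (hemb j).continuous
  have hCc : IsClosed {x : X | seqComp γ k x = seqComp γ l x} :=
    isClosed_eq (seqComp_continuous hcont k) (seqComp_continuous hcont l)
  have hint : (interior {x : X | seqComp γ k x = seqComp γ l x}).Nonempty := by
    rw [IsNowhereDense, hCc.closure_eq] at hC
    exact Set.nonempty_iff_ne_empty.mpr hC
  have hVne : (interior {x : X | seqComp γ k x = seqComp γ l x} ∩ U).Nonempty :=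
    hUdense.inter_open_nonempty _ isOpen_interior hint
  exact key_lemma γ (fun j => (hemb j).injective) U hUdisj hUsub k l hkl _
    (isOpen_interior.inter hUopen) hVne Set.inter_subset_right
    (fun x hx => interior_subset (s := {x : X | seqComp γ k x = seqComp γ l x}) hx.1)
end

section
/- Let X be a compact metric space and let γ = (γ_1, …, γ_N) be an iterated function system on X such that every γ_k is a topological embedding. Assume there exists a dense open subset U of X such that γ_1(U), …, γ_N(U) are pairwise disjoint open subsets of X contained in U. Then there exists a subset 𝕏 of X such that: (1) 𝕏 is dense in X and completely invariant under γ; (2) the images γ_1(𝕏), …, γ_N(𝕏) are pairwise disjoint; (3) each restriction γ_k|_𝕏 is injective; (4) 𝕏 ⊆ U; and (5) 𝕏 is comeager in X. -/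
open Set Topology

section Meagre

variable {X Y : Type*} [TopologicalSpace X] [TopologicalSpace Y] {f : X → Y} {U : Set X}

lemma Topology.IsEmbedding.isOpenMap_domRestrict (hf : IsEmbedding f) (hU : IsOpen (f '' U)) :
    IsOpenMap (U.domRestrict f) :=
  (IsOpenEmbedding.mk (hf.comp .subtypeVal) (by rwa [← range_domRestrict] at hU)).isOpenMap

lemma IsMeagre.preimage_of_isOpenMap_domRestrict {s : Set Y} (hs : IsMeagre s)
    (hc : ContinuousOn f U) (ho : IsOpenMap (U.domRestrict f)) (hU : IsMeagre Uᶜ) :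
    IsMeagre (f ⁻¹' s) := by
  have hpreU : IsMeagre (f ⁻¹' s ∩ U) := by
    have := (hs.preimage_of_isOpenMap hc.domRestrict ho).image_val
    rwa [domRestrict_eq, preimage_comp, Subtype.image_preimage_coe, inter_comm] at this
  refine (hpreU.union hU).mono fun x hx => ?_
  by_cases hxU : x ∈ U <;> simp_all

end Meagre

namespace CompletelyInvariant

variable {X : Type*} {N : ℕ} {γ : Fin N → X → X} {S : Set X}

lemma compl (hS : CompletelyInvariant γ S) : CompletelyInvariant γ Sᶜ := by
  refine fun k => ⟨?_, fun x hx hxS => hx ((hS k).1 (mem_image_of_mem _ hxS))⟩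
  rintro _ ⟨x, hx, rfl⟩ hγx
  exact hx ((hS k).2 hγx)

end CompletelyInvariant

section InvariantHull

variable {X : Type*} {N : ℕ} (γ : Fin N → X → X)

def invariantStep (S : Set X) : Set X :=
  S ∪ ⋃ k, (γ k '' S ∪ γ k ⁻¹' S)

def invariantHull (A : Set X) : Set X :=
  ⋃ n, (invariantStep γ)^[n] A

variable {γ}

lemma subset_invariantHull (A : Set X) : A ⊆ invariantHull γ A :=
  subset_iUnion (fun n => (invariantStep γ)^[n] A) 0

lemma mem_invariantHull_of_mem_invariantStep {A : Set X} {x : X} {n : ℕ}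
    (hx : x ∈ invariantStep γ ((invariantStep γ)^[n] A)) : x ∈ invariantHull γ A :=
  mem_iUnion.mpr ⟨n + 1, by rwa [Function.iterate_succ_apply']⟩

lemma completelyInvariant_invariantHull (A : Set X) :
    CompletelyInvariant γ (invariantHull γ A) := by
  refine fun k => ⟨?_, fun x hx => ?_⟩
  · rintro _ ⟨x, hx, rfl⟩
    obtain ⟨n, hn⟩ := mem_iUnion.mp hx
    exact mem_invariantHull_of_mem_invariantStep
      (Or.inr (mem_iUnion.mpr ⟨k, Or.inl (mem_image_of_mem _ hn)⟩))
  · obtain ⟨n, hn⟩ := mem_iUnion.mp hx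
    exact mem_invariantHull_of_mem_invariantStep (Or.inr (mem_iUnion.mpr ⟨k, Or.inr hn⟩))

lemma isMeagre_invariantHull [TopologicalSpace X]
    (himage : ∀ k s, IsMeagre s → IsMeagre (γ k '' s))
    (hpreimage : ∀ k s, IsMeagre s → IsMeagre (γ k ⁻¹' s))
    {A : Set X} (hA : IsMeagre A) : IsMeagre (invariantHull γ A) := by
  refine isMeagre_iUnion fun n => ?_
  induction n with
  | zero => exact hA
  | succ n ih =>
    rw [Function.iterate_succ_apply']
    exact ih.union (isMeagre_iUnion fun k => (himage k _ ih).union (hpreimage k _ ih))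

end InvariantHull

theorem exists_good_invariant_subset_general {X : Type*} [MetricSpace X] [CompactSpace X]
    {N : ℕ} (γ : Fin N → X → X) (hemb : ∀ k, Topology.IsEmbedding (γ k))
    (U : Set X) (hUopen : IsOpen U) (hUdense : Dense U)
    (himgopen : ∀ k : Fin N, IsOpen (γ k '' U))
    (hUdisj : ∀ j k : Fin N, j ≠ k → Disjoint (γ j '' U) (γ k '' U)) :
    ∃ 𝕏 : Set X, Dense 𝕏 ∧ CompletelyInvariant γ 𝕏 ∧
      (∀ j k : Fin N, j ≠ k → Disjoint (γ j '' 𝕏) (γ k '' 𝕏)) ∧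
      (∀ k : Fin N, Set.InjOn (γ k) 𝕏) ∧
      𝕏 ⊆ U ∧ IsMeagre 𝕏ᶜ := by
  have hUc : IsMeagre Uᶜ := by
    rw [IsMeagre, compl_compl]
    exact residual_of_dense_open hUopen hUdense
  have hM : IsMeagre (invariantHull γ Uᶜ) :=
    isMeagre_invariantHull (fun k _ hs => (hemb k).isInducing.isMeagre_image hs)
      (fun k _ hs => hs.preimage_of_isOpenMap_domRestrict (hemb k).continuous.continuousOn
        ((hemb k).isOpenMap_domRestrict (himgopen k)) hUc) hUc
  have hXU : (invariantHull γ Uᶜ)ᶜ ⊆ U := compl_subset_comm.mp (subset_invariantHull _)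
  refine ⟨_, dense_of_mem_residual hM, (completelyInvariant_invariantHull _).compl,
    fun j k hjk => (hUdisj j k hjk).mono (image_mono hXU) (image_mono hXU),
    fun k => (hemb k).injective.injOn, hXU, by rwa [compl_compl]⟩

/-- Lemma 6.1.1: if `γ` is an iterated function system of embeddings of a compact metric
space satisfying the open set condition (witnessed by `U`), then there is a dense, comeager,
completely `γ`-invariant subset `𝕏 ⊆ U` whose images `γ_1(𝕏), …, γ_N(𝕏)` are pairwise
disjoint and on which every `γ_k` is injective. -/
theorem exists_good_invariant_subset {X : Type*} [MetricSpace X] [CompactSpace X]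
    {N : ℕ} (γ : Fin N → X → X) (hemb : ∀ k, Topology.IsEmbedding (γ k))
    (U : Set X) (hUopen : IsOpen U) (hUdense : Dense U)
    (himgopen : ∀ k : Fin N, IsOpen (γ k '' U))
    (hUdisj : ∀ j k : Fin N, j ≠ k → Disjoint (γ j '' U) (γ k '' U))
    (hUsub : ∀ k : Fin N, γ k '' U ⊆ U) :
    ∃ 𝕏 : Set X, Dense 𝕏 ∧ CompletelyInvariant γ 𝕏 ∧
      (∀ j k : Fin N, j ≠ k → Disjoint (γ j '' 𝕏) (γ k '' 𝕏)) ∧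
      (∀ k : Fin N, Set.InjOn (γ k) 𝕏) ∧
      𝕏 ⊆ U ∧ IsMeagre 𝕏ᶜ :=
  exists_good_invariant_subset_general γ hemb U hUopen hUdense himgopen hUdisj
end

section
/- Let X be a metric space with no isolated points and let γ = (γ_1, …, γ_N) be an iterated function system on X such that each γ_k is a proper contraction, i.e., there exist constants 0 < c_k ≤ c'_k < 1 with c_k·d(x,y) ≤ d(γ_k(x), γ_k(y)) ≤ c'_k·d(x,y) for all x, y ∈ X. Assume there exists a dense open subset U of X such that the images γ_1(U), …, γ_N(U) are pairwise disjoint and contained in U. Then γ is essentially free. -/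
/-- Lemma 6.1.5 (with the open set condition): an iterated function system of proper
contractions of a metric space without isolated points, satisfying the open set condition,
is essentially free. -/
theorem essentiallyFree_of_contractions {X : Type*} [MetricSpace X]
    (hnoiso : ∀ x : X, ¬ IsOpen ({x} : Set X))
    {N : ℕ} (γ : Fin N → X → X)
    (hcontr : ∀ k : Fin N, ∃ c c' : ℝ, 0 < c ∧ c ≤ c' ∧ c' < 1 ∧
      ∀ x y : X, c * dist x y ≤ dist (γ k x) (γ k y) ∧ dist (γ k x) (γ k y) ≤ c' * dist x y)
    (hU : ∃ U : Set X, IsOpen U ∧ Dense U ∧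
      (∀ j k : Fin N, j ≠ k → Disjoint (γ j '' U) (γ k '' U)) ∧
      (∀ k : Fin N, γ k '' U ⊆ U)) :
    EssentiallyFree γ := by
  obtain ⟨U, hUopen, hUdense, hUdisj, hUmap⟩ := hU
  -- each γ k is continuous
  have hγc : ∀ k : Fin N, Continuous (γ k) := by
    intro k
    obtain ⟨c, c', hc, hcc', _, h⟩ := hcontr k
    have hc'0 : (0 : ℝ) ≤ c' := hc.le.trans hcc'
    exact (LipschitzWith.of_dist_le_mul (K := ⟨c', hc'0⟩)
      (fun x y => (h x y).2)).continuous
  -- each γ k is injective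
  have hγinj : ∀ k : Fin N, Function.Injective (γ k) := by
    intro k x y hxy
    obtain ⟨c, c', hc, _, _, h⟩ := hcontr k
    have := (h x y).1
    rw [hxy, dist_self] at this
    have hd : dist x y ≤ 0 := nonpos_of_mul_nonpos_right (le_trans this (le_refl 0)) hc
    exact dist_le_zero.mp hd
  -- seqComp is continuous
  have hcont : ∀ t : List (Fin N), Continuous (seqComp γ t) := by
    intro t
    induction t with
    | nil => exact continuous_id
    | cons a t ih => exact (hγc a).comp ih
  -- seqComp maps U into U
  have hmapsU : ∀ (t : List (Fin N)) (x : X), x ∈ U → seqComp γ t x ∈ U := by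
    intro t
    induction t with
    | nil => exact fun x hx => hx
    | cons a t ih => exact fun x hx => hUmap a ⟨seqComp γ t x, ih x hx, rfl⟩
  -- a nonempty composition is a strict contraction
  have hstrict : ∀ t : List (Fin N), t ≠ [] → ∃ c' : ℝ, 0 ≤ c' ∧ c' < 1 ∧
      ∀ x y : X, dist (seqComp γ t x) (seqComp γ t y) ≤ c' * dist x y := by
    intro t
    induction t with
    | nil => exact fun h => absurd rfl h
    | cons a t ih =>
      intro _
      obtain ⟨c, c', hc, hcc', hc'1, h⟩ := hcontr a
      have hc'0 : (0 : ℝ) ≤ c' := hc.le.trans hcc'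
      rcases eq_or_ne t [] with rfl | ht
      · exact ⟨c', hc'0, hc'1, fun x y => (h _ _).2⟩
      · obtain ⟨d, hd0, hd1, hdist⟩ := ih ht
        refine ⟨c' * d, mul_nonneg hc'0 hd0, ?_, fun x y => ?_⟩
        · calc c' * d ≤ 1 * d := by nlinarith
            _ = d := one_mul d
            _ < 1 := hd1
        · calc dist (seqComp γ (a :: t) x) (seqComp γ (a :: t) y)
              ≤ c' * dist (seqComp γ t x) (seqComp γ t y) := (h _ _).2
            _ ≤ c' * (d * dist x y) := by
                exact mul_le_mul_of_nonneg_left (hdist x y) hc'0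
            _ = c' * d * dist x y := by ring
  -- key claim: agreement on a nonempty open subset of U forces equality of the words
  have key : ∀ (k l : List (Fin N)) (W : Set X), IsOpen W → W.Nonempty → W ⊆ U →
      (∀ x ∈ W, seqComp γ k x = seqComp γ l x) → k = l := by
    intro k
    induction k with
    | nil =>
      intro l W hWopen hWne hWU hagree
      rcases l with _ | ⟨b, l'⟩
      · rfl
      · exfalso
        obtain ⟨c', _, hc'1, hdist⟩ := hstrict (b :: l') (by simp)
        obtain ⟨x, hx⟩ := hWne
        -- find a second point in W
        have : ¬ W ⊆ {x} := by
          intro hsub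
          have : W = {x} := Set.Subset.antisymm hsub (by simpa using hx)
          exact hnoiso x (this ▸ hWopen)
        obtain ⟨y, hyW, hyx⟩ := Set.not_subset.mp this
        have hxy : (0 : ℝ) < dist x y := dist_pos.mpr (Ne.symm (by simpa using hyx))
        have hx' : seqComp γ (b :: l') x = x := (hagree x hx).symm
        have hy' : seqComp γ (b :: l') y = y := (hagree y hyW).symm
        have := hdist x y
        rw [hx', hy'] at this
        nlinarith
    | cons a k' ih =>
      intro l W hWopen hWne hWU hagree
      rcases l with _ | ⟨b, l'⟩
      · exfalso
        obtain ⟨c', _, hc'1, hdist⟩ := hstrict (a :: k') (by simp)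
        obtain ⟨x, hx⟩ := hWne
        have : ¬ W ⊆ {x} := by
          intro hsub
          have : W = {x} := Set.Subset.antisymm hsub (by simpa using hx)
          exact hnoiso x (this ▸ hWopen)
        obtain ⟨y, hyW, hyx⟩ := Set.not_subset.mp this
        have hxy : (0 : ℝ) < dist x y := dist_pos.mpr (Ne.symm (by simpa using hyx))
        have hx' : seqComp γ (a :: k') x = x := hagree x hx
        have hy' : seqComp γ (a :: k') y = y := hagree y hyW
        have := hdist x y
        rw [hx', hy'] at this
        nlinarith
      · obtain ⟨x, hx⟩ := hWne
        have hxU : x ∈ U := hWU hx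
        have heq : γ a (seqComp γ k' x) = γ b (seqComp γ l' x) := hagree x hx
        have hab : a = b := by
          by_contra hab
          have h1 : γ a (seqComp γ k' x) ∈ γ a '' U :=
            ⟨_, hmapsU k' x hxU, rfl⟩
          have h2 : γ a (seqComp γ k' x) ∈ γ b '' U := by
            rw [heq]; exact ⟨_, hmapsU l' x hxU, rfl⟩
          exact (hUdisj a b hab).ne_of_mem h1 h2 rfl
        subst hab
        have : k' = l' := by
          refine ih l' W hWopen ⟨x, hx⟩ hWU ?_
          intro y hy
          exact hγinj a (hagree y hy)
        rw [this]
  -- conclude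
  intro k l hkl
  set C := {x : X | seqComp γ k x = seqComp γ l x} with hC
  have hCclosed : IsClosed C := isClosed_eq (hcont k) (hcont l)
  rw [hCclosed.isNowhereDense_iff]
  by_contra hne
  obtain ⟨x, hx⟩ := Set.nonempty_iff_ne_empty.mpr hne
  have hV : (interior C ∩ U).Nonempty :=
    hUdense.inter_open_nonempty _ isOpen_interior ⟨x, hx⟩
  have : k = l := by
    refine key k l (interior C ∩ U) (isOpen_interior.inter hUopen) hV
      Set.inter_subset_right ?_
    intro y hy
    exact (interior_subset hy.1 : y ∈ C)
  exact hkl this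
end

section
/- Let X := [0,1] ⊆ ℝ and define γ_1, γ_2 : X → X by γ_1(x) := x/2 and γ_2(x) := −x/2 + 1 (both map [0,1] into [0,1]). Then the iterated function system γ = (γ_1, γ_2) is essentially free: for all distinct finite sequences 𝐤 and 𝐥 of indices in {1, 2}, the set {x ∈ [0,1] : γ_𝐤(x) = γ_𝐥(x)} is nowhere dense in [0,1]. -/
/-- The map `x ↦ x / 2` on the unit interval `[0, 1]`. -/
noncomputable def gammaOne : Set.Icc (0 : ℝ) 1 → Set.Icc (0 : ℝ) 1 :=
  fun x => ⟨x.1 / 2, ⟨by have := x.2.1; linarith, by have := x.2.2; linarith⟩⟩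

/-- The map `x ↦ -x / 2 + 1` on the unit interval `[0, 1]`. -/
noncomputable def gammaTwo : Set.Icc (0 : ℝ) 1 → Set.Icc (0 : ℝ) 1 :=
  fun x => ⟨-x.1 / 2 + 1, ⟨by have := x.2.2; linarith, by have := x.2.1; linarith⟩⟩

namespace EFhelp

notation "I01" => Set.Icc (0:ℝ) 1

noncomputable abbrev G : Fin 2 → I01 → I01 := ![gammaOne, gammaTwo]

lemma g0_val (y : I01) : (gammaOne y).1 = y.1 / 2 := rfl
lemma g1_val (y : I01) : (gammaTwo y).1 = -y.1 / 2 + 1 := rfl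
lemma G0 : G 0 = gammaOne := rfl
lemma G1 : G 1 = gammaTwo := rfl
lemma step (k : Fin 2) (t : List (Fin 2)) (x : I01) :
    seqComp G (k :: t) x = G k (seqComp G t x) := rfl

lemma fin2 (k : Fin 2) : k = 0 ∨ k = 1 := by omega

lemma seqComp_affine (l : List (Fin 2)) :
    ∃ s c : ℝ, |s| = (1/2 : ℝ) ^ l.length ∧
      ∀ x : I01, (seqComp G l x).1 = s * x.1 + c := by
  induction l with
  | nil => exact ⟨1, 0, by simp, fun x => by simp [seqComp]⟩
  | cons k t ih =>
    obtain ⟨s, c, hs, h⟩ := ih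
    rcases fin2 k with hk | hk <;> subst hk
    · refine ⟨s/2, c/2, ?_, fun x => ?_⟩
      · rw [abs_div, hs, List.length_cons, pow_succ]; norm_num; ring
      · rw [step, G0, g0_val, h x]; ring
    · refine ⟨-s/2, -c/2 + 1, ?_, fun x => ?_⟩
      · rw [abs_div, abs_neg, hs, List.length_cons, pow_succ]; norm_num; ring
      · rw [step, G1, g1_val, h x]; ring

lemma not_const_one (t : List (Fin 2)) :
    ¬ ∀ x : I01, (seqComp G t x).1 = 1 := by
  intro hc
  obtain ⟨s, c, hs, hf⟩ := seqComp_affine t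
  have e0 := hc ⟨0, by norm_num⟩
  have e1 := hc ⟨1, by norm_num⟩
  rw [hf] at e0 e1
  simp only [Set.Icc.mk_one, Set.Icc.coe_one] at e0 e1
  norm_num at e0 e1
  have hs0 : s = 0 := by linarith
  rw [hs0, abs_zero] at hs
  exact pow_ne_zero t.length (by norm_num : (1/2:ℝ) ≠ 0) hs.symm

lemma mixed_const {f g : I01 → I01} (h : ∀ x, gammaOne (f x) = gammaTwo (g x)) :
    ∀ x, (f x).1 = 1 := by
  intro x
  have hv := congrArg Subtype.val (h x)
  rw [g0_val, g1_val] at hv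
  have h1 := (f x).2.2
  have h2 := (g x).2.2
  linarith

lemma seqComp_inj (k l : List (Fin 2))
    (h : ∀ x, seqComp G k x = seqComp G l x) : k = l := by
  have hlen : k.length = l.length := by
    obtain ⟨s, c, hs, hf⟩ := seqComp_affine k
    obtain ⟨s', c', hs', hf'⟩ := seqComp_affine l
    have h0 := congrArg Subtype.val (h ⟨0, by norm_num⟩)
    have h1 := congrArg Subtype.val (h ⟨1, by norm_num⟩)
    rw [hf, hf'] at h0 h1
    norm_num at h0 h1
    have hss : |s| = |s'| := by
      have : s = s' := by linarith
      rw [this]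
    rw [hs, hs'] at hss
    exact pow_right_injective₀ (by norm_num) (by norm_num) hss
  induction k generalizing l with
  | nil =>
    cases l with
    | nil => rfl
    | cons b t' => simp at hlen
  | cons a t ih =>
    cases l with
    | nil => simp at hlen
    | cons b t' =>
      have hab : a = b := by
        by_contra hab
        rcases fin2 a with ha | ha <;> rcases fin2 b with hb | hb <;>
          subst ha <;> subst hb
        · exact hab rfl
        · refine not_const_one t (mixed_const (f := seqComp G t) (g := seqComp G t') ?_)
          intro x; have := h x; rw [step, step, G0, G1] at this; exact this
        · refine not_const_one t' (mixed_const (f := seqComp G t') (g := seqComp G t) ?_)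
          intro x; have := (h x).symm; rw [step, step, G0, G1] at this; exact this
        · exact hab rfl
      subst hab
      have hteq : ∀ x, seqComp G t x = seqComp G t' x := by
        intro x
        have hx := congrArg Subtype.val (h x)
        rw [step, step] at hx
        rcases fin2 a with ha | ha <;> subst ha
        · rw [G0, g0_val, g0_val] at hx
          exact Subtype.ext (by linarith)
        · rw [G1, g1_val, g1_val] at hx
          exact Subtype.ext (by linarith)
      rw [ih t' hteq (by simpa using hlen)]

lemma singleton_nwd (x : I01) : IsNowhereDense ({x} : Set I01) := by
  show interior (closure {x}) = ∅
  rw [closure_singleton]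
  by_contra hne
  rw [← Set.not_nonempty_iff_eq_empty] at hne
  push_neg at hne
  obtain ⟨y, hy⟩ := hne
  have hyx : y = x := by have := interior_subset hy; simpa using this
  subst hyx
  have hopen : IsOpen ({y} : Set I01) := by
    have hi : interior ({y} : Set I01) = {y} :=
      Set.Subset.antisymm interior_subset (by intro z hz; rw [Set.mem_singleton_iff] at hz; rw [hz]; exact hy)
    rw [← hi]; exact isOpen_interior
  have hclopen : IsClopen ({y} : Set I01) := ⟨isClosed_singleton, hopen⟩
  rcases isClopen_iff.1 hclopen with hE | hU
  · exact (Set.singleton_ne_empty y) hE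
  · have h0 : (⟨0, by norm_num⟩ : I01) ∈ ({y} : Set I01) := hU ▸ Set.mem_univ _
    have h1 : (⟨1, by norm_num⟩ : I01) ∈ ({y} : Set I01) := hU ▸ Set.mem_univ _
    rw [Set.mem_singleton_iff] at h0 h1
    have : ((0:ℝ) : ℝ) = 1 := by
      have := h0.trans h1.symm
      exact congrArg Subtype.val this
    norm_num at this

end EFhelp


open EFhelp in
/-- Example 6.1.6: the iterated function system `(x ↦ x/2, x ↦ -x/2 + 1)` on `[0, 1]`
is essentially free. -/
theorem essentiallyFree_halfMaps : EssentiallyFree ![gammaOne, gammaTwo] := by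
  intro k l hkl
  obtain ⟨s, c, hs, hf⟩ := seqComp_affine k
  obtain ⟨s', c', hs', hf'⟩ := seqComp_affine l
  have hnotall : ¬ ∀ x, seqComp G k x = seqComp G l x :=
    fun hall => hkl (seqComp_inj k l hall)
  have hsub : Set.Subsingleton {x : I01 | seqComp G k x = seqComp G l x} := by
    intro x hx y hy
    have hx' : s * (x:I01).1 + c = s' * x.1 + c' := by
      rw [← hf x, ← hf' x]; exact congrArg Subtype.val hx
    have hy' : s * (y:I01).1 + c = s' * y.1 + c' := by
      rw [← hf y, ← hf' y]; exact congrArg Subtype.val hy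
    by_cases hss : s = s'
    · exfalso
      have hcc : c = c' := by rw [hss] at hx'; linarith
      exact hnotall fun z => Subtype.ext (by rw [hf z, hf' z, hss, hcc])
    · have hz : (s - s') * (x.1 - y.1) = 0 := by nlinarith [hx', hy']
      rcases mul_eq_zero.1 hz with h | h
      · exact absurd (by linarith : s = s') hss
      · exact Subtype.ext (by linarith)
  rcases hsub.eq_empty_or_singleton with hS | ⟨x, hS⟩
  · show IsNowhereDense {x : I01 | seqComp G k x = seqComp G l x}
    rw [hS]; exact isNowhereDense_empty
  · show IsNowhereDense {x : I01 | seqComp G k x = seqComp G l x}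
    rw [hS]; exact singleton_nwd x
end
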